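/- arXiv:1105.5313 — 2 statements merged into one kernel-verified Lean document; each statement's English description precedes it below -/
import Mathlib

section
/- The fiber {w ∈ S_n : α_w = α} of the left-to-right-maximum map over any order-preserving non-decreasing transformation α is a Bruhat interval: it equals the set of permutations lying between its unique 321-avoiding member and its unique 312-avoiding member in the Bruhat order. -/
/-!
Bruhat order on `S_n` is the dominance order
`u ≤ w ↔ ∀ p q, #{k < p | q ≤ u k} ≤ #{k < p | q ≤ w k}` (the tableau criterion). Both
implications go by induction along a reduced word, using how the counts change under right
multiplication by a simple transposition. Dominance is monotone for `lrMax`, which confines a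
Bruhat interval between two members of a fiber to that fiber.

Conversely, members of a fiber agree on the positions of the values of `α` (the records) and
fill the remaining positions with the remaining values, each below the running maximum. If `w`
avoids 321, every non-record value below a non-record entry `w P` occurs before `P`; if `w`
avoids 312, every non-record value between `w P` and `α P` occurs before `P`. Comparing the
counts row by row with any `v` of the fiber gives `wmin ≤ v ≤ wmax` in dominance order.
-/

open Pointwise

/-- The simple transposition `(i, i+1)` in the symmetric group on `Fin n`. -/
def simpleT {n : ℕ} (i : Fin (n - 1)) : Equiv.Perm (Fin n) :=
  Equiv.swap ⟨i.1, by have := i.2; omega⟩ ⟨i.1 + 1, by have := i.2; omega⟩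

/-- Defining relations of the 0-Hecke monoid. -/
def heckeRels (n : ℕ) : Set (FreeMonoid (Fin (n - 1)) × FreeMonoid (Fin (n - 1))) :=
  {p | (∃ i, p = (FreeMonoid.of i * FreeMonoid.of i, FreeMonoid.of i)) ∨
       (∃ i j, i.1 + 2 ≤ j.1 ∧
          p = (FreeMonoid.of i * FreeMonoid.of j, FreeMonoid.of j * FreeMonoid.of i)) ∨
       (∃ i j, j.1 = i.1 + 1 ∧
          p = (FreeMonoid.of i * FreeMonoid.of j * FreeMonoid.of i,
               FreeMonoid.of j * FreeMonoid.of i * FreeMonoid.of j))}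

/-- The congruence on the free monoid generated by the 0-Hecke relations. -/
def heckeCon (n : ℕ) : Con (FreeMonoid (Fin (n - 1))) :=
  conGen (fun a b => (a, b) ∈ heckeRels n)

/-- The 0-Hecke monoid `H_n`. -/
abbrev Hecke (n : ℕ) := (heckeCon n).Quotient

/-- The generator `e_i` of the 0-Hecke monoid. -/
def heckeGen (n : ℕ) (i : Fin (n - 1)) : Hecke n := (heckeCon n).mk' (FreeMonoid.of i)

/-- Binary relations on `Fin n` (equivalently, `n × n` Boolean matrices),
with `ξ i j` meaning the `(i,j)` entry is `1`. -/
abbrev BRel (n : ℕ) := Fin n → Fin n → Prop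

/-- The monoid of binary relations / Boolean matrices, under relational
composition (= Boolean matrix multiplication). -/
instance BRel.instMonoid (n : ℕ) : Monoid (BRel n) where
  mul r s := fun i j => ∃ k, r i k ∧ s k j
  one := fun i j => i = j
  mul_assoc r s t := by
    funext i j
    show (∃ k, (∃ m, r i m ∧ s m k) ∧ t k j) = (∃ m, r i m ∧ ∃ k, s m k ∧ t k j)
    apply propext; tauto
  one_mul r := by
    funext i j
    show (∃ k, i = k ∧ r k j) = r i j
    apply propext
    constructor
    · rintro ⟨k, rfl, h⟩; exact h
    · intro h; exact ⟨i, rfl, h⟩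
  mul_one r := by
    funext i j
    show (∃ k, r i k ∧ k = j) = r i j
    apply propext
    constructor
    · rintro ⟨k, h, rfl⟩; exact h
    · intro h; exact ⟨j, h, rfl⟩

theorem BRel.mul_def {n : ℕ} (r s : BRel n) (i j : Fin n) :
    (r * s) i j ↔ ∃ k, r i k ∧ s k j := Iff.rfl

theorem BRel.one_def {n : ℕ} (i j : Fin n) : (1 : BRel n) i j ↔ i = j := Iff.rfl

/-- The generator `ε_i = Φ(id) + Φ(s_i)` of the double Catalan monoid:
the identity matrix plus extra `1` entries at `(i, i+1)` and `(i+1, i)`. -/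
def eps {n : ℕ} (i : Fin (n - 1)) : BRel n := fun a b => a = b ∨ a = simpleT i b

/-- The double Catalan monoid `DC_n`, the submonoid of Boolean matrices
generated by the `ε_i`. -/
def DC (n : ℕ) : Submonoid (BRel n) := Submonoid.closure (Set.range (eps (n := n)))

open Classical in
/-- `max(ξ)(j)` : the largest row index `i` with `ξ i j` (for a reflexive
relation; the diagonal element `j` is thrown in to guarantee nonemptiness). -/
noncomputable def maxF {n : ℕ} (ξ : BRel n) (j : Fin n) : Fin n :=
  (insert j (Finset.univ.filter fun i => ξ i j)).max' (Finset.insert_nonempty _ _)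

open Classical in
/-- `min(ξ)(j)` : the smallest row index `i` with `ξ i j`. -/
noncomputable def minF {n : ℕ} (ξ : BRel n) (j : Fin n) : Fin n :=
  (insert j (Finset.univ.filter fun i => ξ i j)).min' (Finset.insert_nonempty _ _)

/-- A set of `Fin n` is an interval of consecutive integers. -/
def IsIntervalSet {n : ℕ} (S : Set (Fin n)) : Prop :=
  ∀ ⦃a b c : Fin n⦄, a ≤ b → b ≤ c → a ∈ S → c ∈ S → b ∈ S

/-- A binary relation is convex if it is reflexive and all its rows and
columns are intervals. -/
def IsConvexRel {n : ℕ} (ξ : BRel n) : Prop :=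
  (∀ i, ξ i i) ∧ (∀ j, IsIntervalSet {i | ξ i j}) ∧ (∀ j, IsIntervalSet {i | ξ j i})

/-- The left-to-right maximum function `α_w`. -/
def lrMax {n : ℕ} (w : Equiv.Perm (Fin n)) (j : Fin n) : Fin n :=
  (Finset.Iic j).sup' ⟨j, Finset.mem_Iic.2 le_rfl⟩ (fun k => w k)

/-- The right-to-left minimum function `β_w`. -/
def rlMin {n : ℕ} (w : Equiv.Perm (Fin n)) (j : Fin n) : Fin n :=
  (Finset.Ici j).inf' ⟨j, Finset.mem_Ici.2 le_rfl⟩ (fun k => w k)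

/-- The Boolean matrix `Ψ(z_w)`, the image of `w` in the double Catalan
monoid: the `(i,j)` entry is `1` iff `β_w(j) ≤ i ≤ α_w(j)`. -/
def psiMat {n : ℕ} (w : Equiv.Perm (Fin n)) : BRel n :=
  fun i j => rlMin w j ≤ i ∧ i ≤ lrMax w j

/-- `l` is a reduced word for the permutation `w`. -/
def IsRedWord {n : ℕ} (w : Equiv.Perm (Fin n)) (l : List (Fin (n - 1))) : Prop :=
  (l.map simpleT).prod = w ∧
    ∀ l' : List (Fin (n - 1)), (l'.map simpleT).prod = w → l.length ≤ l'.length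

/-- The Bruhat order on the symmetric group, via the subword property. -/
def bruhatLE {n : ℕ} (u w : Equiv.Perm (Fin n)) : Prop :=
  ∃ lw, IsRedWord w lw ∧ ∃ lu, lu.Sublist lw ∧ IsRedWord u lu

/-- `w` is 321-avoiding. -/
def Avoids321 {n : ℕ} (w : Equiv.Perm (Fin n)) : Prop :=
  ¬ ∃ i j k : Fin n, i < j ∧ j < k ∧ w k < w j ∧ w j < w i

/-- `w` is 312-avoiding. -/
def Avoids312 {n : ℕ} (w : Equiv.Perm (Fin n)) : Prop :=
  ¬ ∃ i j k : Fin n, i < j ∧ j < k ∧ w j < w k ∧ w k < w i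

/-- `w` is 4321-avoiding. -/
def Avoids4321 {n : ℕ} (w : Equiv.Perm (Fin n)) : Prop :=
  ¬ ∃ i j k l : Fin n, i < j ∧ j < k ∧ k < l ∧ w l < w k ∧ w k < w j ∧ w j < w i

/-- The monoid `C_n^+` of order-preserving non-decreasing transformations. -/
def Cplus (n : ℕ) : Submonoid (Function.End (Fin n)) where
  carrier := {f | Monotone f ∧ ∀ i, i ≤ f i}
  one_mem' := ⟨monotone_id, fun _ => le_rfl⟩
  mul_mem' := by
    rintro f g ⟨hf1, hf2⟩ ⟨hg1, hg2⟩
    exact ⟨hf1.comp hg1, fun i => (hg2 i).trans (hf2 (g i))⟩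

/-- The monoid `C_n^-` of order-preserving non-increasing transformations. -/
def Cminus (n : ℕ) : Submonoid (Function.End (Fin n)) where
  carrier := {f | Monotone f ∧ ∀ i, f i ≤ i}
  one_mem' := ⟨monotone_id, fun _ => le_rfl⟩
  mul_mem' := by
    rintro f g ⟨hf1, hf2⟩ ⟨hg1, hg2⟩
    exact ⟨hf1.comp hg1, fun i => (hf2 (g i)).trans (hg2 i)⟩

open Equiv Finset

lemma Finset.card_lt_card_of_inter_eq_of_sdiff_ssubset {α : Type*} [DecidableEq α]
    {s t r : Finset α} (h : s ∩ r = t ∩ r) (hst : s \ r ⊂ t \ r) : #s < #t := by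
  rw [← card_inter_add_card_sdiff s r, ← card_inter_add_card_sdiff t r, h]
  exact Nat.add_lt_add_left (card_lt_card hst) _

section SimpleTranspositions

variable {n : ℕ}

def adjLeft (i : Fin (n - 1)) : Fin n := ⟨i.1, by omega⟩

def adjRight (i : Fin (n - 1)) : Fin n := ⟨i.1 + 1, by omega⟩

lemma adjLeft_lt_adjRight (i : Fin (n - 1)) : adjLeft i < adjRight i :=
  Fin.lt_def.2 (Nat.lt_succ_self _)

lemma simpleT_adjLeft (i : Fin (n - 1)) : simpleT i (adjLeft i) = adjRight i :=
  swap_apply_left _ _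

lemma simpleT_adjRight (i : Fin (n - 1)) : simpleT i (adjRight i) = adjLeft i :=
  swap_apply_right _ _

@[simp]
lemma simpleT_mul_self (i : Fin (n - 1)) : simpleT i * simpleT i = (1 : Perm (Fin n)) :=
  swap_mul_self _ _

@[simp]
lemma simpleT_apply_simpleT (i : Fin (n - 1)) (k : Fin n) : simpleT i (simpleT i k) = k :=
  swap_apply_self _ _ _

lemma val_simpleT_apply (i : Fin (n - 1)) (k : Fin n) :
    (simpleT i k).1 = if k.1 = i.1 then i.1 + 1 else if k.1 = i.1 + 1 then i.1 else k.1 := by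
  unfold simpleT
  rw [swap_apply_def]
  split_ifs <;> simp_all [Fin.ext_iff]

lemma simpleT_lt_simpleT_iff {i : Fin (n - 1)} {a b : Fin n}
    (h₁ : (a, b) ≠ (adjLeft i, adjRight i)) (h₂ : (a, b) ≠ (adjRight i, adjLeft i)) :
    simpleT i a < simpleT i b ↔ a < b := by
  simp only [ne_eq, Prod.mk.injEq, adjLeft, adjRight, Fin.ext_iff] at h₁ h₂
  rw [Fin.lt_def, Fin.lt_def, val_simpleT_apply, val_simpleT_apply]
  split_ifs <;> omega

end SimpleTranspositions

section Inversions

variable {n : ℕ}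

def invCount (w : Perm (Fin n)) : ℕ := #{x : Fin n × Fin n | x.1 < x.2 ∧ w x.2 < w x.1}

lemma invCount_one : invCount (1 : Perm (Fin n)) = 0 := by
  rw [invCount, card_eq_zero, filter_eq_empty_iff]
  simp only [Perm.one_apply]
  exact fun x _ h => lt_asymm h.1 h.2

lemma invCount_mul_simpleT_of_lt {w : Perm (Fin n)} {i : Fin (n - 1)}
    (h : w (adjLeft i) < w (adjRight i)) : invCount (w * simpleT i) = invCount w + 1 := by
  -- after relabelling both coordinates by `simpleT i`, only the pair `(adjRight i, adjLeft i)`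
  -- changes status
  have hrelabel : invCount (w * simpleT i) =
      #{x : Fin n × Fin n | simpleT i x.1 < simpleT i x.2 ∧ w x.2 < w x.1} := by
    unfold invCount
    refine card_equiv ((simpleT i).prodCongr (simpleT i)) fun x => ?_
    rw [mem_filter, mem_filter]
    simp
  have hnew :
      univ.filter (fun x : Fin n × Fin n => simpleT i x.1 < simpleT i x.2 ∧ w x.2 < w x.1) =
        insert (adjRight i, adjLeft i)
          (univ.filter fun x : Fin n × Fin n => x.1 < x.2 ∧ w x.2 < w x.1) := by
    ext ⟨a, b⟩
    simp only [mem_filter, mem_univ, true_and, mem_insert, Prod.mk.injEq]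
    by_cases h₁ : (a, b) = (adjLeft i, adjRight i)
    · simp only [Prod.mk.injEq] at h₁
      obtain ⟨rfl, rfl⟩ := h₁
      simp [simpleT_adjLeft, simpleT_adjRight, (adjLeft_lt_adjRight i).ne, lt_asymm h,
        lt_asymm (adjLeft_lt_adjRight i)]
    by_cases h₂ : (a, b) = (adjRight i, adjLeft i)
    · simp only [Prod.mk.injEq] at h₂
      obtain ⟨rfl, rfl⟩ := h₂
      simp [simpleT_adjLeft, simpleT_adjRight, adjLeft_lt_adjRight, h]
    simp only [Prod.mk.injEq] at h₂
    rw [simpleT_lt_simpleT_iff h₁ (by simpa using h₂)]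
    tauto
  rw [hrelabel, hnew, card_insert_of_notMem, invCount]
  simp [(adjLeft_lt_adjRight i).not_gt]

lemma invCount_mul_simpleT_of_gt {w : Perm (Fin n)} {i : Fin (n - 1)}
    (h : w (adjRight i) < w (adjLeft i)) : invCount (w * simpleT i) + 1 = invCount w := by
  have h' : (w * simpleT i) (adjLeft i) < (w * simpleT i) (adjRight i) := by
    simpa [simpleT_adjLeft, simpleT_adjRight] using h
  simpa [mul_assoc] using (invCount_mul_simpleT_of_lt h').symm

lemma invCount_mul_simpleT_le (w : Perm (Fin n)) (i : Fin (n - 1)) :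
    invCount (w * simpleT i) ≤ invCount w + 1 := by
  rcases lt_or_gt_of_ne (w.injective.ne (adjLeft_lt_adjRight i).ne) with h | h
  · exact (invCount_mul_simpleT_of_lt h).le
  · have := invCount_mul_simpleT_of_gt h
    omega

lemma invCount_prod_le (l : List (Fin (n - 1))) :
    invCount (l.map simpleT).prod ≤ l.length := by
  induction l using List.reverseRecOn with
  | nil => simp [invCount_one]
  | append_singleton l i ih =>
    simpa using (invCount_mul_simpleT_le _ i).trans (Nat.succ_le_succ ih)

lemma exists_simpleT_descent {w : Perm (Fin n)} (hw : w ≠ 1) :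
    ∃ i : Fin (n - 1), w (adjRight i) < w (adjLeft i) := by
  contrapose! hw
  obtain _ | m := n
  · exact Subsingleton.elim _ _
  have hmono : StrictMono w := Fin.strictMono_iff_lt_succ.2 fun i =>
    lt_of_le_of_ne (hw ⟨i.1, by omega⟩) (w.injective.ne Fin.castSucc_lt_succ.ne)
  exact Perm.ext fun k => congrFun hmono.eq_id k

lemma exists_word_length_eq_invCount (w : Perm (Fin n)) :
    ∃ l : List (Fin (n - 1)), (l.map simpleT).prod = w ∧ l.length = invCount w := by
  induction hk : invCount w generalizing w with
  | zero =>
    refine ⟨[], ?_, rfl⟩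
    by_contra hw
    obtain ⟨i, hi⟩ := exists_simpleT_descent (Ne.symm hw)
    have := invCount_mul_simpleT_of_gt hi
    omega
  | succ k ih =>
    have hw : w ≠ 1 := by
      rintro rfl
      simp [invCount_one] at hk
    obtain ⟨i, hi⟩ := exists_simpleT_descent hw
    have hdrop := invCount_mul_simpleT_of_gt hi
    obtain ⟨l, hl, hlen⟩ := ih (w * simpleT i) (by omega)
    exact ⟨l ++ [i], by simp [hl, mul_assoc], by simp [hlen]⟩

lemma isRedWord_iff {w : Perm (Fin n)} {l : List (Fin (n - 1))} :
    IsRedWord w l ↔ (l.map simpleT).prod = w ∧ l.length = invCount w := by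
  refine ⟨fun ⟨hl, hmin⟩ => ⟨hl, le_antisymm ?_ (hl ▸ invCount_prod_le l)⟩, fun ⟨hl, hlen⟩ =>
    ⟨hl, fun l' hl' => hlen ▸ hl' ▸ invCount_prod_le l'⟩⟩
  obtain ⟨l', hl', hlen'⟩ := exists_word_length_eq_invCount w
  exact hlen' ▸ hmin l' hl'

end Inversions

section Dominance

variable {n : ℕ}

def domCount (w : Perm (Fin n)) (p q : ℕ) : ℕ := #{k : Fin n | k.1 < p ∧ q ≤ (w k).1}

def DominanceLE (u w : Perm (Fin n)) : Prop := ∀ p q, domCount u p q ≤ domCount w p q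

lemma domCount_zero (w : Perm (Fin n)) (q : ℕ) : domCount w 0 q = 0 := by
  simp [domCount]

lemma domCount_succ (w : Perm (Fin n)) {p : ℕ} (hp : p < n) (q : ℕ) :
    domCount w (p + 1) q = domCount w p q + if q ≤ (w ⟨p, hp⟩).1 then 1 else 0 := by
  simp only [domCount, card_filter]
  rw [← Fintype.sum_ite_eq' (⟨p, hp⟩ : Fin n) fun k => if q ≤ (w k).1 then 1 else 0,
    ← sum_add_distrib]
  refine sum_congr rfl fun k _ => ?_
  have hk : k = ⟨p, hp⟩ ↔ k.1 = p := Fin.ext_iff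
  split_ifs <;> omega

lemma domCount_succ_of_le (w : Perm (Fin n)) {p : ℕ} (hp : n ≤ p) (q : ℕ) :
    domCount w (p + 1) q = domCount w p q := by
  simp only [domCount]
  congr 1
  ext k
  simp only [mem_filter, mem_univ, true_and]
  omega

lemma domCount_add_two (w : Perm (Fin n)) (i : Fin (n - 1)) (q : ℕ) :
    domCount w (i.1 + 2) q = domCount w i.1 q
      + (if q ≤ (w (adjLeft i)).1 then 1 else 0) + (if q ≤ (w (adjRight i)).1 then 1 else 0) := by
  rw [domCount_succ w (p := i.1 + 1) (by omega), domCount_succ w (p := i.1) (by omega)]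
  rfl

lemma domCount_mul_simpleT_of_ne (w : Perm (Fin n)) {i : Fin (n - 1)} {p : ℕ}
    (hp : p ≠ i.1 + 1) (q : ℕ) : domCount (w * simpleT i) p q = domCount w p q := by
  unfold domCount
  refine card_equiv (simpleT i) fun k => ?_
  rw [mem_filter, mem_filter]
  have := val_simpleT_apply i k
  simp only [mem_univ, true_and, Perm.mul_apply]
  split_ifs at this <;> omega

lemma domCount_mul_simpleT_self (w : Perm (Fin n)) (i : Fin (n - 1)) (q : ℕ) :
    domCount (w * simpleT i) (i.1 + 1) q
      = domCount w i.1 q + if q ≤ (w (adjRight i)).1 then 1 else 0 := by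
  rw [domCount_succ _ (by omega), domCount_mul_simpleT_of_ne w (by omega), Perm.mul_apply,
    show (⟨i.1, _⟩ : Fin n) = adjLeft i from rfl, simpleT_adjLeft]

lemma domCount_eq_card_values (w : Perm (Fin n)) (p q : ℕ) :
    domCount w p q = #{y : Fin n | (w⁻¹ y).1 < p ∧ q ≤ y.1} := by
  unfold domCount
  refine card_equiv w fun k => ?_
  rw [mem_filter, mem_filter]
  simp

lemma domCount_add_card_values_lt (w : Perm (Fin n)) (p q : ℕ) :
    domCount w p q + #{y : Fin n | (w⁻¹ y).1 < p ∧ y.1 < q} = #{k : Fin n | k.1 < p} := by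
  rw [domCount_eq_card_values]
  have hsplit := card_filter_add_card_filter_not
    (s := ({y : Fin n | (w⁻¹ y).1 < p} : Finset (Fin n))) (fun y : Fin n => q ≤ y.1)
  simp only [filter_filter, not_le] at hsplit
  rw [hsplit]
  refine card_equiv w⁻¹ fun y => ?_
  rw [mem_filter, mem_filter]
  simp

lemma dominanceLE_of_forall_lt {u w : Perm (Fin n)}
    (h : ∀ (P : Fin n) (q : ℕ), (w P).1 < q → q ≤ (u P).1 → domCount u P q < domCount w P q) :
    DominanceLE u w := by
  intro p q
  induction p with
  | zero => simp [domCount_zero]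
  | succ p ih =>
    rcases lt_or_ge p n with hp | hp
    · rw [domCount_succ u hp, domCount_succ w hp]
      have := h ⟨p, hp⟩ q
      dsimp only at this
      split_ifs <;> omega
    · rw [domCount_succ_of_le u hp, domCount_succ_of_le w hp]
      exact ih

namespace DominanceLE

variable {u w : Perm (Fin n)}

lemma refl (w : Perm (Fin n)) : DominanceLE w w := fun _ _ => le_rfl

lemma trans {v : Perm (Fin n)} (h₁ : DominanceLE u v) (h₂ : DominanceLE v w) :
    DominanceLE u w :=
  fun p q => (h₁ p q).trans (h₂ p q)

lemma mul_simpleT_right (h : DominanceLE u w) {i : Fin (n - 1)}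
    (hu : u (adjLeft i) < u (adjRight i)) : DominanceLE u (w * simpleT i) := by
  intro p q
  by_cases hp : p = i.1 + 1
  · -- row `i + 1` is the only one that changes; bound it through the unchanged row `i + 2`
    subst hp
    rw [domCount_mul_simpleT_self, domCount_succ u (by omega)]
    have h₁ := h i.1 q
    have h₂ := h (i.1 + 2) q
    rw [domCount_add_two, domCount_add_two] at h₂
    have hu' := Fin.lt_def.1 hu
    change domCount u i.1 q + (if q ≤ (u (adjLeft i)).1 then 1 else 0) ≤ _
    split_ifs at h₂ ⊢ <;> omega
  · rw [domCount_mul_simpleT_of_ne w hp]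
    exact h p q

lemma mul_simpleT (h : DominanceLE u w) {i : Fin (n - 1)}
    (hi : w (adjLeft i) < w (adjRight i) ∨ u (adjRight i) < u (adjLeft i)) :
    DominanceLE (u * simpleT i) (w * simpleT i) := by
  intro p q
  by_cases hp : p = i.1 + 1
  · subst hp
    rw [domCount_mul_simpleT_self, domCount_mul_simpleT_self]
    have h₁ := h i.1 q
    have h₂ := h (i.1 + 2) q
    rw [domCount_add_two, domCount_add_two] at h₂
    rcases hi with hi | hi <;> have hi' := Fin.lt_def.1 hi <;> split_ifs at h₂ ⊢ <;> omega
  · rw [domCount_mul_simpleT_of_ne u hp, domCount_mul_simpleT_of_ne w hp]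
    exact h p q

end DominanceLE

end Dominance

section LeftToRightMaxima

variable {n : ℕ} {w : Perm (Fin n)} {j k P y : Fin n}

lemma le_lrMax (w : Perm (Fin n)) (h : k ≤ j) : w k ≤ lrMax w j :=
  le_sup' (fun k => w k) (mem_Iic.2 h)

lemma lrMax_le_iff : lrMax w j ≤ y ↔ ∀ k ≤ j, w k ≤ y :=
  ⟨fun h _ hk => (le_lrMax w hk).trans h, fun h => sup'_le _ _ fun k hk => h k (mem_Iic.1 hk)⟩

lemma exists_apply_eq_lrMax (w : Perm (Fin n)) (j : Fin n) : ∃ k ≤ j, w k = lrMax w j := by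
  obtain ⟨k, hk, he⟩ := exists_mem_eq_sup' nonempty_Iic fun k => w k
  exact ⟨k, mem_Iic.1 hk, he.symm⟩

lemma lrMax_mono (w : Perm (Fin n)) : Monotone (lrMax w) :=
  fun _ _ h => lrMax_le_iff.2 fun _ hk => le_lrMax w (hk.trans h)

lemma lrMax_le_lrMax_of_dominanceLE {u : Perm (Fin n)} (h : DominanceLE u w) (j : Fin n) :
    lrMax u j ≤ lrMax w j := by
  obtain ⟨k, hkj, hk⟩ := exists_apply_eq_lrMax u j
  have hu : 0 < domCount u (j.1 + 1) (u k).1 :=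
    card_pos.2 ⟨k, by simpa using Nat.lt_succ_of_le (Fin.le_def.1 hkj)⟩
  obtain ⟨m, hm⟩ := card_pos.1 (hu.trans_le (h _ _))
  simp only [mem_filter, mem_univ, true_and] at hm
  calc lrMax u j = u k := hk.symm
    _ ≤ w m := Fin.le_def.2 hm.2
    _ ≤ lrMax w j := le_lrMax w (Fin.le_def.2 (Nat.le_of_lt_succ hm.1))

lemma apply_lt_lrMax_of_notMem_range (h : w j ∉ Set.range (lrMax w)) : w j < lrMax w j :=
  lt_of_le_of_ne (le_lrMax w le_rfl) fun he => h ⟨j, he.symm⟩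

lemma apply_eq_lrMax_iff : w j = lrMax w j ↔ ∀ k < j, lrMax w k < lrMax w j := by
  constructor
  · intro hj k hk
    obtain ⟨k', hk', he⟩ := exists_apply_eq_lrMax w k
    rw [← he, ← hj]
    exact lt_of_le_of_ne (hj ▸ le_lrMax w (hk'.trans hk.le))
      (w.injective.ne (hk'.trans_lt hk).ne)
  · intro h
    obtain ⟨k, hkj, hk⟩ := exists_apply_eq_lrMax w j
    obtain rfl : k = j := hkj.eq_or_lt.resolve_right fun hlt =>
      (h k hlt).not_ge (hk ▸ le_lrMax w le_rfl)
    exact hk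

lemma apply_eq_lrMax_of_mem_range (h : w j ∈ Set.range (lrMax w)) : w j = lrMax w j := by
  obtain ⟨m, hm⟩ := h
  obtain ⟨k, hkm, hk⟩ := exists_apply_eq_lrMax w m
  obtain rfl : k = j := w.injective (hk.trans hm)
  exact le_antisymm (le_lrMax w le_rfl) (hm ▸ lrMax_mono w hkm)

lemma Avoids321.inv_apply_lt (h : Avoids321 w) (hP : w P < lrMax w P) (hy : y < w P) :
    w⁻¹ y < P := by
  obtain ⟨r, hrP, hr⟩ := exists_apply_eq_lrMax w P
  have hrP' : r < P := hrP.lt_of_ne (by rintro rfl; exact hP.ne hr)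
  refine lt_of_le_of_ne (le_of_not_gt fun hPy => h ⟨r, P, w⁻¹ y, hrP', hPy, ?_, hr ▸ hP⟩) ?_
  · simpa using hy
  · rintro rfl
    simp at hy

lemma Avoids312.inv_apply_lt (h : Avoids312 w) (hy : w P < y) (hy' : y < lrMax w P) :
    w⁻¹ y < P := by
  obtain ⟨r, hrP, hr⟩ := exists_apply_eq_lrMax w P
  have hrP' : r < P := hrP.lt_of_ne (by rintro rfl; exact (hy.trans hy').ne hr)
  refine lt_of_le_of_ne (le_of_not_gt fun hPy => h ⟨r, P, w⁻¹ y, hrP', hPy, ?_, ?_⟩) ?_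
  · simpa using hy
  · simpa [hr] using hy'
  · rintro rfl
    simp at hy

end LeftToRightMaxima

section Bruhat

variable {n : ℕ} {u w : Perm (Fin n)} {i : Fin (n - 1)}

lemma IsRedWord.append_simpleT {l : List (Fin (n - 1))} (hl : IsRedWord w l)
    (hw : w (adjLeft i) < w (adjRight i)) : IsRedWord (w * simpleT i) (l ++ [i]) := by
  rw [isRedWord_iff] at hl ⊢
  simp [hl.1, hl.2, invCount_mul_simpleT_of_lt hw]

lemma bruhatLE_mul_simpleT_right (h : bruhatLE u w) (hw : w (adjLeft i) < w (adjRight i)) :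
    bruhatLE u (w * simpleT i) := by
  obtain ⟨lw, hlw, lu, hsub, hlu⟩ := h
  exact ⟨lw ++ [i], hlw.append_simpleT hw, lu, hsub.trans (List.sublist_append_left _ _), hlu⟩

lemma bruhatLE_mul_simpleT (h : bruhatLE u w) (hu : u (adjLeft i) < u (adjRight i))
    (hw : w (adjLeft i) < w (adjRight i)) : bruhatLE (u * simpleT i) (w * simpleT i) := by
  obtain ⟨lw, hlw, lu, hsub, hlu⟩ := h
  exact ⟨lw ++ [i], hlw.append_simpleT hw, lu ++ [i], hsub.append (List.Sublist.refl _),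
    hlu.append_simpleT hu⟩

lemma bruhatLE_one_one : bruhatLE (1 : Perm (Fin n)) 1 :=
  have h : IsRedWord (1 : Perm (Fin n)) [] := isRedWord_iff.2 ⟨rfl, by simp [invCount_one]⟩
  ⟨[], h, [], List.Sublist.refl _, h⟩

lemma dominanceLE_prod_of_sublist {lw lu : List (Fin (n - 1))}
    (hred : lw.length = invCount (lw.map simpleT).prod) (hsub : lu.Sublist lw) :
    DominanceLE (lu.map simpleT).prod (lw.map simpleT).prod := by
  induction lw using List.reverseRecOn generalizing lu with
  | nil =>
    rw [List.sublist_nil.1 hsub]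
    exact DominanceLE.refl _
  | append_singleton l i ih =>
    simp only [List.map_append, List.map_singleton, List.prod_append, List.prod_singleton,
      List.length_append, List.length_singleton] at hred ⊢
    have hle := invCount_prod_le l
    have hstep := invCount_mul_simpleT_le (l.map simpleT).prod i
    have hasc : (l.map simpleT).prod (adjLeft i) < (l.map simpleT).prod (adjRight i) := by
      refine lt_of_le_of_ne (le_of_not_gt fun hdesc => ?_)
        ((Equiv.injective _).ne (adjLeft_lt_adjRight i).ne)
      have := invCount_mul_simpleT_of_gt hdesc
      omega
    obtain ⟨r, r', rfl, hr, hr'⟩ := List.sublist_append_iff.1 hsub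
    have ih' := ih (by omega) hr
    rcases List.sublist_singleton.1 hr' with rfl | rfl
    · simpa using ih'.trans ((DominanceLE.refl _).mul_simpleT_right hasc)
    · simpa using ih'.mul_simpleT (Or.inl hasc)

lemma dominanceLE_of_bruhatLE (h : bruhatLE u w) : DominanceLE u w := by
  obtain ⟨lw, ⟨hlw, hlw'⟩, lu, hsub, ⟨hlu, -⟩⟩ := h
  rw [← hlw, ← hlu]
  refine dominanceLE_prod_of_sublist ?_ hsub
  obtain ⟨l, hl, hlen⟩ := exists_word_length_eq_invCount w
  exact le_antisymm (hlw ▸ hlen ▸ hlw' l hl) (hlw ▸ invCount_prod_le lw)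

lemma eq_one_of_dominanceLE_one (h : DominanceLE u 1) : u = 1 := by
  have hle : ∀ k, (u k).1 ≤ k.1 := fun k =>
    (le_lrMax u le_rfl).trans <| (lrMax_le_lrMax_of_dominanceLE h k).trans <|
      lrMax_le_iff.2 fun _ hk => hk
  have hsum : ∑ k, (u k).1 = ∑ k : Fin n, k.1 := Equiv.sum_comp u fun k => k.1
  ext k
  exact (sum_eq_sum_iff_of_le fun k _ => hle k).1 hsum k (mem_univ k)

lemma bruhatLE_of_dominanceLE (h : DominanceLE u w) : bruhatLE u w := by
  induction hk : invCount w generalizing u w with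
  | zero =>
    obtain rfl : w = 1 := by
      by_contra hw
      obtain ⟨i, hi⟩ := exists_simpleT_descent hw
      have := invCount_mul_simpleT_of_gt hi
      omega
    rw [eq_one_of_dominanceLE_one h]
    exact bruhatLE_one_one
  | succ k ih =>
    have hw : w ≠ 1 := by
      rintro rfl
      simp [invCount_one] at hk
    obtain ⟨i, hi⟩ := exists_simpleT_descent hw
    have hdrop := invCount_mul_simpleT_of_gt hi
    have hws : (w * simpleT i) (adjLeft i) < (w * simpleT i) (adjRight i) := by
      simpa [simpleT_adjLeft, simpleT_adjRight] using hi
    rcases lt_or_gt_of_ne (u.injective.ne (adjLeft_lt_adjRight i).ne) with hu | hu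
    · simpa [mul_assoc] using
        bruhatLE_mul_simpleT_right (ih (h.mul_simpleT_right hu) (by omega)) hws
    · have hus : (u * simpleT i) (adjLeft i) < (u * simpleT i) (adjRight i) := by
        simpa [simpleT_adjLeft, simpleT_adjRight] using hu
      simpa [mul_assoc] using
        bruhatLE_mul_simpleT (ih (h.mul_simpleT (Or.inr hu)) (by omega)) hus hws

end Bruhat

section Fibers

variable {n : ℕ} {v w : Perm (Fin n)} {j P y : Fin n} {q : ℕ}

lemma apply_eq_apply_of_lrMax_eq (h : lrMax w = lrMax v) (hj : v j ∈ Set.range (lrMax v)) :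
    w j = v j := by
  have hv := apply_eq_lrMax_of_mem_range hj
  rw [hv, ← h, apply_eq_lrMax_iff, h, ← apply_eq_lrMax_iff]
  exact hv

lemma inv_apply_eq_inv_apply_of_lrMax_eq (h : lrMax w = lrMax v)
    (hy : y ∈ Set.range (lrMax v)) : w⁻¹ y = v⁻¹ y := by
  rw [Perm.inv_eq_iff_eq, apply_eq_apply_of_lrMax_eq h (by simpa using hy)]
  simp

lemma domCount_lt_of_avoids321 (hw : lrMax w = lrMax v) (h : Avoids321 w)
    (hq : (v P).1 < q) (hq' : q ≤ (w P).1) : domCount w P q < domCount v P q := by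
  have hvP : v P ∉ Set.range (lrMax v) := fun hr => by
    have := apply_eq_apply_of_lrMax_eq hw hr
    omega
  have hwP : w P ∉ Set.range (lrMax w) := fun hr => by
    have := apply_eq_apply_of_lrMax_eq hw.symm hr
    omega
  have hlow : ∀ y : Fin n, y.1 < q → w⁻¹ y < P := fun y hy =>
    h.inv_apply_lt (apply_lt_lrMax_of_notMem_range hwP) (Fin.lt_def.2 (by omega))
  -- values of `lrMax` sit at the same places in `v` and `w`; of the other values below `q`,
  -- `w` places all before `P`, while `v` places `v P` at `P`
  have hlt :
      #{y : Fin n | (v⁻¹ y).1 < P ∧ y.1 < q} < #{y : Fin n | (w⁻¹ y).1 < P ∧ y.1 < q} := by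
    refine card_lt_card_of_inter_eq_of_sdiff_ssubset (r := {y | y ∈ Set.range (lrMax v)}) ?_ ?_
    · ext y
      simp only [mem_inter, mem_filter, mem_univ, true_and, and_congr_left_iff]
      intro hy _
      rw [inv_apply_eq_inv_apply_of_lrMax_eq hw hy]
    · refine (ssubset_iff_of_subset fun y => ?_).2 ⟨v P, ?_, ?_⟩
      · simp only [mem_sdiff, mem_filter, mem_univ, true_and]
        exact fun ⟨⟨_, hy⟩, hr⟩ => ⟨⟨hlow y hy, hy⟩, hr⟩
      · simp only [mem_sdiff, mem_filter, mem_univ, true_and]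
        exact ⟨⟨hlow _ hq, hq⟩, hvP⟩
      · simp
  have := domCount_add_card_values_lt w P q
  have := domCount_add_card_values_lt v P q
  omega

lemma domCount_lt_of_avoids312 (hw : lrMax w = lrMax v) (h : Avoids312 w)
    (hq : (w P).1 < q) (hq' : q ≤ (v P).1) : domCount v P q < domCount w P q := by
  have hvP : v P ∉ Set.range (lrMax v) := fun hr => by
    have := apply_eq_apply_of_lrMax_eq hw hr
    omega
  have hhigh : ∀ y : Fin n, q ≤ y.1 → y < lrMax v P → w⁻¹ y < P := fun y hy hy' =>
    h.inv_apply_lt (Fin.lt_def.2 (by omega)) (hw ▸ hy')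
  -- as for `domCount_lt_of_avoids321`, now with the values in `[q, lrMax v P)`
  rw [domCount_eq_card_values, domCount_eq_card_values]
  refine card_lt_card_of_inter_eq_of_sdiff_ssubset (r := {y | y ∈ Set.range (lrMax v)}) ?_ ?_
  · ext y
    simp only [mem_inter, mem_filter, mem_univ, true_and, and_congr_left_iff]
    intro hy _
    rw [inv_apply_eq_inv_apply_of_lrMax_eq hw hy]
  · refine (ssubset_iff_of_subset fun y => ?_).2 ⟨v P, ?_, ?_⟩
    · simp only [mem_sdiff, mem_filter, mem_univ, true_and]
      rintro ⟨⟨hyP, hy⟩, hr⟩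
      have hle : y ≤ lrMax v P := by
        simpa using le_lrMax v (Fin.le_def.2 hyP.le)
      exact ⟨⟨hhigh y hy (hle.lt_of_ne fun he => hr ⟨P, he.symm⟩), hy⟩, hr⟩
    · simp only [mem_sdiff, mem_filter, mem_univ, true_and]
      exact ⟨⟨hhigh _ hq' (apply_lt_lrMax_of_notMem_range hvP), hq'⟩, hvP⟩
    · simp

lemma dominanceLE_of_avoids321 (hw : lrMax w = lrMax v) (h : Avoids321 w) :
    DominanceLE w v :=
  dominanceLE_of_forall_lt fun _ _ hq hq' => domCount_lt_of_avoids321 hw h hq hq'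

lemma dominanceLE_of_avoids312 (hw : lrMax w = lrMax v) (h : Avoids312 w) :
    DominanceLE v w :=
  dominanceLE_of_forall_lt fun _ _ hq hq' => domCount_lt_of_avoids312 hw h hq hq'

end Fibers

/-- The fiber of the left-to-right-maximum map over `α` is the Bruhat
interval between its 321-avoiding member and its 312-avoiding member. -/
theorem stmt_9 (n : ℕ) (α : Fin n → Fin n) (wmin wmax : Equiv.Perm (Fin n))
    (h1 : lrMax wmin = α) (h2 : Avoids321 wmin)
    (h3 : lrMax wmax = α) (h4 : Avoids312 wmax) :
    ∀ v : Equiv.Perm (Fin n), lrMax v = α ↔ (bruhatLE wmin v ∧ bruhatLE v wmax) := by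
  intro v
  constructor
  · rintro rfl
    exact ⟨bruhatLE_of_dominanceLE (dominanceLE_of_avoids321 h1 h2),
      bruhatLE_of_dominanceLE (dominanceLE_of_avoids312 h3 h4)⟩
  · rintro ⟨hmin, hmax⟩
    funext j
    refine le_antisymm ?_ ?_
    · exact h3 ▸ lrMax_le_lrMax_of_dominanceLE (dominanceLE_of_bruhatLE hmax) j
    · exact h1 ▸ lrMax_le_lrMax_of_dominanceLE (dominanceLE_of_bruhatLE hmin) j
end

section
/- The number of elements of the double Catalan monoid DC_n equals the number of 4321-avoiding permutations in S_n. -/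
open Pointwise

/-!
Left multiplication by `ε_i` acts on the matrices `psiMat w` as the Demazure product with `s_i`.
Hence `DC_n` is exactly the set of matrices `psiMat w`, `w ∈ S_n`: each of them is reached from
`psiMat 1 = 1` by peeling off left descents, by induction on the weight `∑ j * w j`, which
increases whenever an inversion of `w` is swapped into order.

The matrix `psiMat w` records the left-to-right maxima and right-to-left minima of `w`, hence its
free positions (the middles of `321`-patterns) and its values outside them. A `4321`-pattern is
exactly an inversion between two free positions. Swapping such an inversion keeps `psiMat` and
raises the weight, so every fibre of `psiMat` contains a `4321`-avoiding permutation; and such a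
permutation is increasing on its free positions, so it is the only one in its fibre.
-/

namespace DoubleCatalan

open Equiv

variable {n : ℕ}

section Extremes

variable (w : Perm (Fin n)) {j k m : Fin n}

lemma le_lrMax (h : k ≤ j) : w k ≤ lrMax w j :=
  Finset.le_sup' _ (Finset.mem_Iic.2 h)

lemma rlMin_le (h : j ≤ k) : rlMin w j ≤ w k :=
  Finset.inf'_le _ (Finset.mem_Ici.2 h)

lemma lrMax_le (h : ∀ k ≤ j, w k ≤ m) : lrMax w j ≤ m :=
  Finset.sup'_le _ _ fun k hk => h k (Finset.mem_Iic.1 hk)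

lemma le_rlMin (h : ∀ k ≥ j, m ≤ w k) : m ≤ rlMin w j :=
  Finset.le_inf' _ _ fun k hk => h k (Finset.mem_Ici.1 hk)

lemma exists_lrMax_eq (j : Fin n) : ∃ k ≤ j, lrMax w j = w k := by
  obtain ⟨k, hk, hkj⟩ := Finset.exists_mem_eq_sup' ⟨j, Finset.mem_Iic.2 le_rfl⟩ fun k => w k
  exact ⟨k, Finset.mem_Iic.1 hk, hkj⟩

lemma exists_rlMin_eq (j : Fin n) : ∃ k ≥ j, rlMin w j = w k := by
  obtain ⟨k, hk, hkj⟩ := Finset.exists_mem_eq_inf' ⟨j, Finset.mem_Ici.2 le_rfl⟩ fun k => w k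
  exact ⟨k, Finset.mem_Ici.1 hk, hkj⟩

lemma rlMin_le_lrMax (j : Fin n) : rlMin w j ≤ lrMax w j :=
  (rlMin_le w le_rfl).trans (le_lrMax w le_rfl)

end Extremes

lemma psiMat_one : psiMat (1 : Perm (Fin n)) = 1 := by
  have hmax (j : Fin n) : lrMax 1 j = j :=
    le_antisymm (lrMax_le 1 fun _ hk => hk) (le_lrMax 1 le_rfl)
  have hmin (j : Fin n) : rlMin 1 j = j :=
    le_antisymm (rlMin_le 1 le_rfl) (le_rlMin 1 fun _ hk => hk)
  funext x j
  simp only [psiMat, hmax, hmin, BRel.one_def, eq_iff_iff]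
  exact ⟨fun h => le_antisymm h.2 h.1, fun h => h ▸ ⟨le_rfl, le_rfl⟩⟩

section PsiMatEq

variable {w w' : Perm (Fin n)}

lemma lrMax_eq_of_psiMat_eq (h : psiMat w = psiMat w') : lrMax w = lrMax w' := by
  have key {u v : Perm (Fin n)} (huv : psiMat u = psiMat v) (j : Fin n) :
      lrMax u j ≤ lrMax v j := by
    have : psiMat u (lrMax u j) j := ⟨rlMin_le_lrMax u j, le_rfl⟩
    rw [huv] at this
    exact this.2
  exact funext fun j => le_antisymm (key h j) (key h.symm j)

lemma rlMin_eq_of_psiMat_eq (h : psiMat w = psiMat w') : rlMin w = rlMin w' := by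
  have key {u v : Perm (Fin n)} (huv : psiMat u = psiMat v) (j : Fin n) :
      rlMin v j ≤ rlMin u j := by
    have : psiMat u (rlMin u j) j := ⟨le_rfl, rlMin_le_lrMax u j⟩
    rw [huv] at this
    exact this.1
  exact funext fun j => le_antisymm (key h.symm j) (key h j)

end PsiMatEq

section SimpleTransposition

variable (i : Fin (n - 1)) {x m : Fin n}

def lo : Fin n := ⟨i, by have := i.2; omega⟩

def hi : Fin n := ⟨i + 1, by have := i.2; omega⟩

lemma simpleT_eq_swap : simpleT i = swap (lo i) (hi i) := rfl

lemma lo_lt_hi : lo i < hi i := Fin.lt_def.2 (Nat.lt_succ_self _)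

lemma simpleT_lo : simpleT i (lo i) = hi i := swap_apply_left _ _

lemma simpleT_hi : simpleT i (hi i) = lo i := swap_apply_right _ _

lemma simpleT_mul_self : simpleT i * simpleT i = 1 := swap_mul_self _ _

lemma simpleT_mul_eq_mul_swap (w : Perm (Fin n)) :
    simpleT i * w = w * swap (w⁻¹ (hi i)) (w⁻¹ (lo i)) := by
  rw [simpleT_eq_swap, swap_mul_eq_mul_swap, swap_comm]

lemma val_simpleT_apply (x : Fin n) : (simpleT i x : ℕ) =
    if (x : ℕ) = i then (i : ℕ) + 1 else if (x : ℕ) = i + 1 then (i : ℕ) else x := by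
  rw [simpleT_eq_swap, swap_apply_def]
  split_ifs <;> simp_all [Fin.ext_iff, lo, hi]

lemma le_simpleT_apply (h : x ≠ hi i) : x ≤ simpleT i x := by
  have := val_simpleT_apply i x
  simp only [ne_eq, Fin.ext_iff, hi, Fin.le_def] at h ⊢
  split_ifs at this <;> omega

lemma simpleT_apply_le (h : x ≠ lo i) : simpleT i x ≤ x := by
  have := val_simpleT_apply i x
  simp only [ne_eq, Fin.ext_iff, lo, Fin.le_def] at h ⊢
  split_ifs at this <;> omega

lemma simpleT_apply_le_max (h : x ≤ m) : simpleT i x ≤ max m (simpleT i m) := by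
  have hx := val_simpleT_apply i x
  have hm := val_simpleT_apply i m
  simp only [le_max_iff, Fin.le_def] at h ⊢
  split_ifs at hx hm <;> omega

lemma min_le_simpleT_apply (h : m ≤ x) : min m (simpleT i m) ≤ simpleT i x := by
  have hx := val_simpleT_apply i x
  have hm := val_simpleT_apply i m
  simp only [min_le_iff, Fin.le_def] at h ⊢
  split_ifs at hx hm <;> omega

/-- An interval together with its image under `s_i` is again an interval: a lower endpoint
`i + 1` drops to `i` and an upper endpoint `i` rises to `i + 1`. -/
lemma interval_union_simpleT {a b : Fin n} (hab : a ≤ b) :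
    (a ≤ x ∧ x ≤ b ∨ a ≤ simpleT i x ∧ simpleT i x ≤ b) ↔
      min a (simpleT i a) ≤ x ∧ x ≤ max b (simpleT i b) := by
  have hx := val_simpleT_apply i x
  have ha := val_simpleT_apply i a
  have hb := val_simpleT_apply i b
  simp only [min_le_iff, le_max_iff, Fin.le_def] at hab ⊢
  split_ifs at hx ha hb <;> omega

end SimpleTransposition

lemma eps_mul_apply (i : Fin (n - 1)) (ξ : BRel n) (x j : Fin n) :
    (eps i * ξ) x j ↔ ξ x j ∨ ξ (simpleT i x) j := by
  simp only [BRel.mul_def, eps, simpleT_eq_swap, ← swap_apply_eq_iff, or_and_right, exists_or,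
    exists_eq_left']

section Demazure

variable (w : Perm (Fin n)) {i : Fin (n - 1)}

lemma lrMax_simpleT_mul (h : w⁻¹ (lo i) < w⁻¹ (hi i)) (j : Fin n) :
    lrMax (simpleT i * w) j = max (lrMax w j) (simpleT i (lrMax w j)) := by
  obtain ⟨m, hmj, hm⟩ := exists_lrMax_eq w j
  have hσm : simpleT i (lrMax w j) ≤ lrMax (simpleT i * w) j := by
    rw [hm]; exact le_lrMax (simpleT i * w) hmj
  refine le_antisymm (lrMax_le _ fun k hk => simpleT_apply_le_max i (le_lrMax w hk))
    (max_le ?_ hσm)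
  by_cases hhi : lrMax w j = hi i
  · -- `lo i` then occurs before `hi i = w m`, so still within the first `j` positions
    have hinv : w⁻¹ (hi i) = m := by simp [← hhi, hm]
    calc lrMax w j = (simpleT i * w) (w⁻¹ (lo i)) := by simp [hhi, simpleT_lo]
      _ ≤ _ := le_lrMax _ (h.le.trans (hinv ▸ hmj))
  · exact (le_simpleT_apply i hhi).trans hσm

lemma rlMin_simpleT_mul (h : w⁻¹ (lo i) < w⁻¹ (hi i)) (j : Fin n) :
    rlMin (simpleT i * w) j = min (rlMin w j) (simpleT i (rlMin w j)) := by
  obtain ⟨m, hjm, hm⟩ := exists_rlMin_eq w j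
  have hσm : rlMin (simpleT i * w) j ≤ simpleT i (rlMin w j) := by
    rw [hm]; exact rlMin_le (simpleT i * w) hjm
  refine le_antisymm (le_min ?_ hσm)
    (le_rlMin _ fun k hk => min_le_simpleT_apply i (rlMin_le w hk))
  by_cases hlo : rlMin w j = lo i
  · have hinv : w⁻¹ (lo i) = m := by simp [← hlo, hm]
    calc rlMin (simpleT i * w) j ≤ (simpleT i * w) (w⁻¹ (hi i)) :=
          rlMin_le _ ((hinv ▸ hjm).trans h.le)
      _ = rlMin w j := by simp [hlo, simpleT_hi]
  · exact hσm.trans (simpleT_apply_le i hlo)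

lemma lrMax_ne_lo (h : w⁻¹ (hi i) < w⁻¹ (lo i)) (j : Fin n) : lrMax w j ≠ lo i := by
  intro hlo
  obtain ⟨m, hmj, hm⟩ := exists_lrMax_eq w j
  have hinv : w⁻¹ (lo i) = m := by simp [← hlo, hm]
  have : hi i ≤ lo i := calc
    hi i = w (w⁻¹ (hi i)) := by simp
    _ ≤ lrMax w j := le_lrMax w (h.le.trans (hinv ▸ hmj))
    _ = lo i := hlo
  exact (lo_lt_hi i).not_ge this

lemma rlMin_ne_hi (h : w⁻¹ (hi i) < w⁻¹ (lo i)) (j : Fin n) : rlMin w j ≠ hi i := by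
  intro hhi
  obtain ⟨m, hjm, hm⟩ := exists_rlMin_eq w j
  have hinv : w⁻¹ (hi i) = m := by simp [← hhi, hm]
  have : hi i ≤ lo i := calc
    hi i = rlMin w j := hhi.symm
    _ ≤ w (w⁻¹ (lo i)) := rlMin_le w ((hinv ▸ hjm).trans h.le)
    _ = lo i := by simp
  exact (lo_lt_hi i).not_ge this

/-- Left multiplication by `ε_i` is the Demazure product with `s_i`. -/
theorem eps_mul_psiMat (i : Fin (n - 1)) :
    eps i * psiMat w = psiMat (if w⁻¹ (lo i) < w⁻¹ (hi i) then simpleT i * w else w) := by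
  funext x j
  rw [eq_iff_iff, eps_mul_apply]
  simp only [psiMat]
  rw [interval_union_simpleT i (rlMin_le_lrMax w j)]
  split_ifs with h
  · rw [lrMax_simpleT_mul w h, rlMin_simpleT_mul w h]
  · have h' : w⁻¹ (hi i) < w⁻¹ (lo i) :=
      (not_lt.1 h).lt_of_ne (w⁻¹.injective.ne (lo_lt_hi i).ne')
    rw [max_eq_left (simpleT_apply_le i (lrMax_ne_lo w h' j)),
      min_eq_left (le_simpleT_apply i (rlMin_ne_hi w h' j))]

end Demazure

def weight (w : Perm (Fin n)) : ℕ := ∑ j : Fin n, (j : ℕ) * w j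

lemma weight_lt_weight_mul_swap {w : Perm (Fin n)} {p q : Fin n} (hpq : p < q)
    (hlt : w q < w p) : weight w < weight (w * swap p q) := by
  have hsplit (f : Fin n → ℕ) : ∑ j, f j = f p + f q + ∑ j ∈ {p, q}ᶜ, f j := by
    rw [← Finset.sum_add_sum_compl {p, q}, Finset.sum_pair hpq.ne]
  have hrest :
      ∑ j ∈ {p, q}ᶜ, (j : ℕ) * (w * swap p q) j = ∑ j ∈ {p, q}ᶜ, (j : ℕ) * w j := by
    refine Finset.sum_congr rfl fun j hj => ?_
    simp only [Finset.mem_compl, Finset.mem_insert, Finset.mem_singleton, not_or] at hj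
    rw [Perm.mul_apply, swap_apply_of_ne_of_ne hj.1 hj.2]
  rw [weight, weight, hsplit, hsplit, hrest, Perm.mul_apply, Perm.mul_apply, swap_apply_left,
    swap_apply_right]
  rw [Fin.lt_def] at hpq hlt
  nlinarith

theorem weight_induction {P : Perm (Fin n) → Prop}
    (step : ∀ w, (∀ v, weight w < weight v → P v) → P w) (w : Perm (Fin n)) : P w := by
  classical
  by_contra hw
  obtain ⟨u, hu, hmax⟩ := Finset.exists_max_image {v | ¬ P v} weight ⟨w, by simpa using hw⟩
  rw [Finset.mem_filter_univ] at hu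
  exact hu (step u fun v hv => by_contra fun hPv =>
    (hmax v ((Finset.mem_filter_univ v).2 hPv)).not_gt hv)

lemma exists_descent {w : Perm (Fin n)} (hw : w ≠ 1) :
    ∃ i : Fin (n - 1), w⁻¹ (hi i) < w⁻¹ (lo i) := by
  by_contra! hasc
  have hmono : StrictMono ⇑w⁻¹ := by
    cases n with
    | zero => exact fun a => a.elim0
    | succ m => exact Fin.strictMono_iff_lt_succ.2 fun i =>
        (hasc i).lt_of_ne (w⁻¹.injective.ne (lo_lt_hi (n := m + 1) i).ne)
  have hid : ⇑w⁻¹ = id := (hmono.range_inj strictMono_id).1 (by simp)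
  exact hw (inv_eq_one.1 (Equiv.ext (congrFun hid)))

lemma eps_mem_DC (i : Fin (n - 1)) : eps i ∈ DC n := Submonoid.subset_closure ⟨i, rfl⟩

lemma psiMat_mem_DC (w : Perm (Fin n)) : psiMat w ∈ DC n := by
  induction w using weight_induction with
  | step w ih =>
  by_cases hw : w = 1
  · rw [hw, psiMat_one]
    exact one_mem _
  obtain ⟨i, hdesc⟩ := exists_descent hw
  set v := simpleT i * w with hv
  have hvdesc : v⁻¹ (lo i) < v⁻¹ (hi i) := by
    simpa [hv, simpleT_eq_swap, swap_inv] using hdesc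
  have hweight : weight w < weight v := by
    rw [hv, simpleT_mul_eq_mul_swap]
    exact weight_lt_weight_mul_swap hdesc (by simpa using lo_lt_hi i)
  have hmul : eps i * psiMat v = psiMat w := by
    rw [eps_mul_psiMat, if_pos hvdesc, hv, ← mul_assoc, simpleT_mul_self, one_mul]
  exact hmul ▸ mul_mem (eps_mem_DC i) (ih v hweight)

theorem mem_DC_iff {ξ : BRel n} : ξ ∈ DC n ↔ ∃ w, psiMat w = ξ := by
  refine ⟨fun hξ => ?_, fun ⟨w, hw⟩ => hw ▸ psiMat_mem_DC w⟩
  induction hξ using Submonoid.closure_induction_left with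
  | one => exact ⟨1, psiMat_one⟩
  | mul_left _ hx _ _ ih =>
    obtain ⟨i, rfl⟩ := hx
    obtain ⟨w, rfl⟩ := ih
    exact ⟨_, (eps_mul_psiMat w i).symm⟩

/-- `j` is neither a left-to-right maximum nor a right-to-left minimum of `w`. -/
def IsFree (w : Perm (Fin n)) (j : Fin n) : Prop :=
  (∃ k < j, w j < w k) ∧ ∃ k > j, w k < w j

section Free

variable {w w' : Perm (Fin n)} {j : Fin n}

lemma exists_lt_apply_lt_iff : (∃ k < j, w j < w k) ↔ ∃ k < j, lrMax w j ≤ lrMax w k := by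
  obtain ⟨m, hmj, hm⟩ := exists_lrMax_eq w j
  constructor
  · rintro ⟨k, hkj, hk⟩
    have hmj' : m < j := hmj.lt_of_ne fun hmj => by
      subst hmj; exact (hk.trans_le (le_lrMax w hkj.le)).ne' hm
    exact ⟨m, hmj', hm ▸ le_lrMax w le_rfl⟩
  · rintro ⟨k, hkj, hk⟩
    obtain ⟨m', hm'k, hm'⟩ := exists_lrMax_eq w k
    refine ⟨m', hm'k.trans_lt hkj, ?_⟩
    exact (le_lrMax w le_rfl |>.trans (hk.trans hm'.le)).lt_of_ne
      (w.injective.ne (hm'k.trans_lt hkj).ne')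

lemma exists_gt_apply_lt_iff : (∃ k > j, w k < w j) ↔ ∃ k > j, rlMin w k ≤ rlMin w j := by
  obtain ⟨m, hjm, hm⟩ := exists_rlMin_eq w j
  constructor
  · rintro ⟨k, hjk, hk⟩
    have hjm' : j < m := hjm.lt_of_ne' fun hmj => by
      subst hmj; exact ((rlMin_le w hjk.le).trans_lt hk).ne hm
    exact ⟨m, hjm', hm ▸ rlMin_le w le_rfl⟩
  · rintro ⟨k, hjk, hk⟩
    obtain ⟨m', hkm', hm'⟩ := exists_rlMin_eq w k
    refine ⟨m', hjk.trans_le hkm', ?_⟩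
    exact (hm'.ge.trans (hk.trans (rlMin_le w le_rfl))).lt_of_ne
      (w.injective.ne (hjk.trans_le hkm').ne')

lemma lrMax_eq_apply (h : ¬ ∃ k < j, w j < w k) : lrMax w j = w j := by
  refine le_antisymm (lrMax_le w fun k hk => ?_) (le_lrMax w le_rfl)
  rcases hk.lt_or_eq with hkj | rfl
  · exact not_lt.1 fun hlt => h ⟨k, hkj, hlt⟩
  · exact le_rfl

lemma rlMin_eq_apply (h : ¬ ∃ k > j, w k < w j) : rlMin w j = w j := by
  refine le_antisymm (rlMin_le w le_rfl) (le_rlMin w fun k hk => ?_)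
  rcases hk.lt_or_eq with hjk | rfl
  · exact not_lt.1 fun hlt => h ⟨k, hjk, hlt⟩
  · exact le_rfl

lemma exists_lt_apply_lt_congr (h : psiMat w = psiMat w') :
    (∃ k < j, w j < w k) ↔ ∃ k < j, w' j < w' k := by
  rw [exists_lt_apply_lt_iff, exists_lt_apply_lt_iff, lrMax_eq_of_psiMat_eq h]

lemma exists_gt_apply_lt_congr (h : psiMat w = psiMat w') :
    (∃ k > j, w k < w j) ↔ ∃ k > j, w' k < w' j := by
  rw [exists_gt_apply_lt_iff, exists_gt_apply_lt_iff, rlMin_eq_of_psiMat_eq h]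

lemma isFree_congr (h : psiMat w = psiMat w') : IsFree w j ↔ IsFree w' j :=
  and_congr (exists_lt_apply_lt_congr h) (exists_gt_apply_lt_congr h)

lemma apply_eq_of_not_isFree (h : psiMat w = psiMat w') (hj : ¬ IsFree w j) : w j = w' j := by
  rcases not_and_or.1 hj with hj | hj
  · rw [← lrMax_eq_apply hj, ← lrMax_eq_apply ((exists_lt_apply_lt_congr h).not.1 hj),
      lrMax_eq_of_psiMat_eq h]
  · rw [← rlMin_eq_apply hj, ← rlMin_eq_apply ((exists_gt_apply_lt_congr h).not.1 hj),
      rlMin_eq_of_psiMat_eq h]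

lemma isFree_inv_apply_congr (h : psiMat w = psiMat w') (y : Fin n) :
    IsFree w (w⁻¹ y) ↔ IsFree w' (w'⁻¹ y) := by
  suffices key : ∀ {u v : Perm (Fin n)}, psiMat u = psiMat v →
      IsFree u (u⁻¹ y) → IsFree v (v⁻¹ y) from ⟨key h, key h.symm⟩
  intro u v huv hu
  by_contra hv
  have hinv : u⁻¹ y = v⁻¹ y := by
    rw [Perm.inv_eq_iff_eq, ← apply_eq_of_not_isFree huv.symm hv]
    simp
  exact hv ((isFree_congr huv).1 (hinv ▸ hu))

lemma strictMonoOn_isFree (hw : Avoids4321 w) : StrictMonoOn w {j | IsFree w j} := by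
  intro p hp q hq hpq
  by_contra hqp
  obtain ⟨a, hap, ha⟩ := hp.1
  obtain ⟨d, hqd, hd⟩ := hq.2
  exact hw ⟨a, p, q, d, hap, hpq, hqd, hd,
    (not_lt.1 hqp).lt_of_ne (w.injective.ne hpq.ne'), ha⟩

/-- Both permutations are increasing on their common free positions, with the same set of values
there: the complement of the values they share elsewhere. -/
theorem psiMat_injOn_avoids4321 : Set.InjOn psiMat {w : Perm (Fin n) | Avoids4321 w} := by
  intro w hw w' hw' h
  let f : {j // IsFree w j} → Fin n := fun j => w j
  let g : {j // IsFree w j} → Fin n := fun j => w' j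
  have hf : StrictMono f := fun a b hab => strictMonoOn_isFree hw a.2 b.2 hab
  have hg : StrictMono g := fun a b hab =>
    strictMonoOn_isFree hw' ((isFree_congr h).1 a.2) ((isFree_congr h).1 b.2) hab
  have hrange : Set.range f = Set.range g := by
    ext y
    simp only [Set.mem_range, Subtype.exists, f, g]
    constructor
    · rintro ⟨j, hj, rfl⟩
      refine ⟨w'⁻¹ (w j), ?_, by simp⟩
      rw [isFree_congr h, ← isFree_inv_apply_congr h]
      simpa using hj
    · rintro ⟨j, hj, rfl⟩
      refine ⟨w⁻¹ (w' j), ?_, by simp⟩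
      rw [isFree_inv_apply_congr h]
      simpa [← isFree_congr h] using hj
  have hfg : f = g := (hf.range_inj hg).1 hrange
  ext1 j
  by_cases hj : IsFree w j
  · exact congrFun hfg ⟨j, hj⟩
  · exact apply_eq_of_not_isFree h hj

end Free

section FreeSwap

variable {w : Perm (Fin n)} {p q : Fin n}

lemma lrMax_mul_swap (hpq : p < q) (hlt : w q < w p) (hp : ∃ k < p, w p < w k) :
    lrMax (w * swap p q) = lrMax w := by
  funext j
  apply le_antisymm <;> refine lrMax_le _ fun k hk => ?_
  · rw [Perm.mul_apply]
    rcases eq_or_ne k p with rfl | hkp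
    · rw [swap_apply_left]; exact hlt.le.trans (le_lrMax w hk)
    rcases eq_or_ne k q with rfl | hkq
    · rw [swap_apply_right]; exact le_lrMax w (hpq.le.trans hk)
    · rw [swap_apply_of_ne_of_ne hkp hkq]; exact le_lrMax w hk
  · rcases eq_or_ne k p with rfl | hkp
    · obtain ⟨m, hmk, hm⟩ := hp
      calc w k ≤ (w * swap k q) m := by
            rw [Perm.mul_apply, swap_apply_of_ne_of_ne hmk.ne (hmk.trans hpq).ne]; exact hm.le
        _ ≤ _ := le_lrMax _ (hmk.le.trans hk)
    rcases eq_or_ne k q with rfl | hkq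
    · calc w k = (w * swap p k) p := by simp
        _ ≤ _ := le_lrMax _ (hpq.le.trans hk)
    · calc w k = (w * swap p q) k := by rw [Perm.mul_apply, swap_apply_of_ne_of_ne hkp hkq]
        _ ≤ _ := le_lrMax _ hk

lemma rlMin_mul_swap (hpq : p < q) (hlt : w q < w p) (hq : ∃ k > q, w k < w q) :
    rlMin (w * swap p q) = rlMin w := by
  funext j
  apply le_antisymm <;> refine le_rlMin _ fun k hk => ?_
  · rcases eq_or_ne k q with rfl | hkq
    · obtain ⟨m, hkm, hm⟩ := hq
      calc rlMin (w * swap p k) j ≤ (w * swap p k) m := rlMin_le _ (hk.trans hkm.le)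
        _ ≤ w k := by
          rw [Perm.mul_apply, swap_apply_of_ne_of_ne (hpq.trans hkm).ne' hkm.ne']; exact hm.le
    rcases eq_or_ne k p with rfl | hkp
    · calc rlMin (w * swap k q) j ≤ (w * swap k q) q := rlMin_le _ (hk.trans hpq.le)
        _ = w k := by simp
    · calc rlMin (w * swap p q) j ≤ (w * swap p q) k := rlMin_le _ hk
        _ = w k := by rw [Perm.mul_apply, swap_apply_of_ne_of_ne hkp hkq]
  · rw [Perm.mul_apply]
    rcases eq_or_ne k p with rfl | hkp
    · rw [swap_apply_left]; exact rlMin_le w (hk.trans hpq.le)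
    rcases eq_or_ne k q with rfl | hkq
    · rw [swap_apply_right]; exact (rlMin_le w hk).trans hlt.le
    · rw [swap_apply_of_ne_of_ne hkp hkq]; exact rlMin_le w hk

lemma psiMat_mul_swap (hpq : p < q) (hlt : w q < w p) (hp : IsFree w p) (hq : IsFree w q) :
    psiMat (w * swap p q) = psiMat w := by
  unfold psiMat
  rw [lrMax_mul_swap hpq hlt hp.1, rlMin_mul_swap hpq hlt hq.2]

end FreeSwap

theorem exists_avoids4321_psiMat_eq (w : Perm (Fin n)) :
    ∃ v, Avoids4321 v ∧ psiMat v = psiMat w := by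
  induction w using weight_induction with
  | step w ih =>
  by_cases hw : Avoids4321 w
  · exact ⟨w, hw, rfl⟩
  obtain ⟨a, p, q, d, hap, hpq, hqd, hdq, hqp, hpa⟩ := not_not.1 hw
  have hp : IsFree w p := ⟨⟨a, hap, hpa⟩, ⟨q, hpq, hqp⟩⟩
  have hq : IsFree w q := ⟨⟨p, hpq, hqp⟩, ⟨d, hqd, hdq⟩⟩
  obtain ⟨v, hv, hvw⟩ := ih _ (weight_lt_weight_mul_swap hpq hqp)
  exact ⟨v, hv, hvw.trans (psiMat_mul_swap hpq hqp hp hq)⟩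

theorem bijective_psiMat_avoids4321 :
    Function.Bijective fun w : {w : Perm (Fin n) // Avoids4321 w} =>
      (⟨psiMat w.1, psiMat_mem_DC w.1⟩ : DC n) := by
  refine ⟨fun w w' h => Subtype.ext (psiMat_injOn_avoids4321 w.2 w'.2 congr($h.1)), ?_⟩
  rintro ⟨ξ, hξ⟩
  obtain ⟨w, rfl⟩ := mem_DC_iff.1 hξ
  obtain ⟨v, hv, hvw⟩ := exists_avoids4321_psiMat_eq w
  exact ⟨⟨v, hv⟩, Subtype.ext hvw⟩

end DoubleCatalan

/-- `|DC_n|` equals the number of 4321-avoiding permutations in `S_n`. -/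
theorem stmt_12 (n : ℕ) :
    Nat.card (DC n) = Nat.card {w : Equiv.Perm (Fin n) // Avoids4321 w} :=
  (Nat.card_eq_of_bijective _ DoubleCatalan.bijective_psiMat_avoids4321).symm
end
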